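/- arXiv:math/0601654 — 4 statements merged into one kernel-verified Lean document; each statement's English description precedes it below -/
import Mathlib

section
/- Let A be a commutative noetherian ring and let B be an essentially finite type, formally étale commutative A-algebra. Let μ : B ⊗_A B → B be the multiplication map and let I = ker μ. Then there exists a unique idempotent e ∈ B ⊗_A B such that μ(e) = 1 and e·x = 0 for every x ∈ I; moreover I = (1 − e)·(B ⊗_A B), so that the map x ↦ (μ(x), (1 − e)·x) is a ring isomorphism from B ⊗_A B onto the product ring B × I, where the ideal I is regarded as a commutative ring with identity element 1 − e. -/
open scoped TensorProduct

universe u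

/-- Let `A` be a commutative noetherian ring and `B` an essentially finite
type, formally étale commutative `A`-algebra.  Let `μ : B ⊗[A] B → B` be the multiplication
map and `I = ker μ`.  Then there exists a unique idempotent `e ∈ B ⊗[A] B` with `μ e = 1`
and `e * x = 0` for every `x ∈ I`; moreover `I = (1 - e) • (B ⊗[A] B)`, and the map
`x ↦ (μ x, (1 - e) * x)` is a ring isomorphism of `B ⊗[A] B` onto `B × I`, the ideal `I`
being regarded as a commutative ring with identity element `1 - e`. -/
theorem statement5 (A B : Type u) [CommRing A] [IsNoetherianRing A] [CommRing B] [Algebra A B]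
    [Algebra.EssFiniteType A B] [Algebra.FormallyEtale A B] :
    (∃! e : B ⊗[A] B, IsIdempotentElem e ∧ Algebra.TensorProduct.lmul' A (S := B) e = 1 ∧
        ∀ x ∈ RingHom.ker (Algebra.TensorProduct.lmul' A (S := B)), e * x = 0) ∧
    ∀ e : B ⊗[A] B,
      (IsIdempotentElem e ∧ Algebra.TensorProduct.lmul' A (S := B) e = 1 ∧
        ∀ x ∈ RingHom.ker (Algebra.TensorProduct.lmul' A (S := B)), e * x = 0) →
      -- the kernel ideal `I` is generated by `1 - e`
      (RingHom.ker (Algebra.TensorProduct.lmul' A (S := B)) = Ideal.span {1 - e}) ∧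
      -- `x ↦ (μ x, (1 - e) * x)` is injective
      Function.Injective (fun x : B ⊗[A] B =>
        ((Algebra.TensorProduct.lmul' A (S := B) x, (1 - e) * x) : B × (B ⊗[A] B))) ∧
      -- it is surjective onto `B × I`
      (∀ (b : B), ∀ y ∈ RingHom.ker (Algebra.TensorProduct.lmul' A (S := B)),
        ∃ x : B ⊗[A] B, Algebra.TensorProduct.lmul' A (S := B) x = b ∧ (1 - e) * x = y) ∧
      -- the second component is multiplicative with identity element `1 - e`
      (∀ x y : B ⊗[A] B, (1 - e) * (x * y) = ((1 - e) * x) * ((1 - e) * y)) ∧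
      (1 - e) * 1 = 1 - e := by
  have hUR : Algebra.FormallyUnramified A B := inferInstance
  obtain ⟨t, ht1, ht2⟩ :=
    (Algebra.FormallyUnramified.iff_exists_tensorProduct (R := A) (S := B)).mp hUR
  -- `t` annihilates the whole kernel ideal
  have hann : ∀ x ∈ RingHom.ker (Algebra.TensorProduct.lmul' A (S := B)), t * x = 0 := by
    intro x hx
    have hx' : x ∈ Ideal.span
        (Set.range fun s : B => (1 : B) ⊗ₜ[A] s - s ⊗ₜ[A] (1 : B)) := by
      rw [KaehlerDifferential.span_range_eq_ideal]
      exact hx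
    refine Submodule.span_induction ?_ (by simp) (fun a b _ _ ha hb => by
      rw [mul_add, ha, hb, add_zero]) (fun c a _ ha => by
      rw [smul_eq_mul, mul_left_comm, ha, mul_zero]) hx'
    rintro _ ⟨s, rfl⟩
    rw [mul_comm]
    exact ht1 s
  have htI : (1 : B ⊗[A] B) - t ∈ RingHom.ker (Algebra.TensorProduct.lmul' A (S := B)) := by
    simp [RingHom.mem_ker, ht2]
  have hidem : IsIdempotentElem t := by
    have := hann _ htI
    rw [mul_sub, mul_one, sub_eq_zero] at this
    exact this.symm
  have key : ∀ e : B ⊗[A] B,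
      (IsIdempotentElem e ∧ Algebra.TensorProduct.lmul' A (S := B) e = 1 ∧
        ∀ x ∈ RingHom.ker (Algebra.TensorProduct.lmul' A (S := B)), e * x = 0) → e = t := by
    rintro e ⟨he0, he1, he2⟩
    have h1 : e * ((1 : B ⊗[A] B) - t) = 0 := he2 _ htI
    have h2 : t * ((1 : B ⊗[A] B) - e) = 0 := hann _ (by simp [RingHom.mem_ker, he1])
    rw [mul_sub, mul_one, sub_eq_zero] at h1 h2
    rw [h1, mul_comm, ← h2]
  refine ⟨⟨t, ⟨hidem, ht2, hann⟩, key⟩, ?_⟩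
  rintro e he
  obtain ⟨he0, he1, he2⟩ := he
  have hsub : (1 : B ⊗[A] B) - e ∈ RingHom.ker (Algebra.TensorProduct.lmul' A (S := B)) := by
    simp [RingHom.mem_ker, he1]
  refine ⟨?_, ?_, ?_, ?_, by ring⟩
  · apply le_antisymm
    · intro x hx
      rw [Ideal.mem_span_singleton]
      exact ⟨x, by rw [sub_mul, one_mul, he2 x hx, sub_zero]⟩
    · rw [Ideal.span_le, Set.singleton_subset_iff]
      exact hsub
  · intro x y hxy
    simp only [Prod.mk.injEq] at hxy
    have hk : x - y ∈ RingHom.ker (Algebra.TensorProduct.lmul' A (S := B)) := by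
      simp [RingHom.mem_ker, map_sub, hxy.1]
    have h1 : e * (x - y) = 0 := he2 _ hk
    have h2 : (1 - e) * (x - y) = 0 := by rw [mul_sub, hxy.2, sub_self]
    have : x - y = 0 := by
      have := congrArg (· + e * (x - y)) h2
      simpa [sub_mul, one_mul, h1] using this
    exact sub_eq_zero.mp this
  · intro b y hy
    refine ⟨e * (b ⊗ₜ[A] 1) + y, ?_, ?_⟩
    · simp [map_mul, he1, RingHom.mem_ker.mp hy]
    · have h1 : (1 - e) * (e * (b ⊗ₜ[A] 1)) = 0 := by
        rw [← mul_assoc, sub_mul, one_mul, he0.eq, sub_self, zero_mul]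
      have h2 : (1 - e) * y = y := by
        rw [sub_mul, one_mul, he2 y hy, sub_zero]
      rw [mul_add, h1, h2, zero_add]
  · intro x y
    have : ((1:B ⊗[A] B) - e) * (1 - e) = 1 - e := by
      rw [sub_mul, one_mul, mul_sub, mul_one, he0.eq]; ring
    calc (1 - e) * (x * y) = ((1 - e) * (1 - e)) * (x * y) := by rw [this]
    _ = ((1 - e) * x) * ((1 - e) * y) := by ring
end

section
/- Let A be a commutative ring and let B be a commutative A-algebra which is finitely generated and projective as an A-module. Regard B ⊗_A B as a B-algebra via the left inclusion b ↦ b ⊗ 1, and let μ : B ⊗_A B → B be the multiplication map. Suppose e ∈ B ⊗_A B is an idempotent satisfying μ(e) = 1 and e·x = 0 for every x ∈ ker μ. Then for every b ∈ B one has tr_{(B ⊗_A B)/B}(e·(b ⊗ 1)) = b. -/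
open scoped TensorProduct

universe u

/-- Let `A` be a commutative ring and `B` a commutative `A`-algebra which is
finitely generated and projective as an `A`-module.  Regard `B ⊗[A] B` as a `B`-algebra via
the left inclusion `b ↦ b ⊗ 1`, and let `μ : B ⊗[A] B → B` be the multiplication map.
Suppose `e ∈ B ⊗[A] B` is an idempotent with `μ e = 1` and `e * x = 0` for all `x ∈ ker μ`.
Then `tr_{(B ⊗[A] B)/B} (e * (b ⊗ 1)) = b` for every `b ∈ B`.

The trace over `B` of multiplication by `z` on the finitely generated projective `B`-module
`B ⊗[A] B` is expressed through an arbitrary finite dual system `(x, f)`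
(so that `z' = ∑ i, f i z' • x i` for all `z'`) as `∑ i, f i (z * x i)`. -/
theorem statement6 (A B : Type u) [CommRing A] [CommRing B] [Algebra A B]
    [Module.Finite A B] [Module.Projective A B]
    (e : B ⊗[A] B) (he : IsIdempotentElem e)
    (he1 : Algebra.TensorProduct.lmul' A (S := B) e = 1)
    (he0 : ∀ x ∈ RingHom.ker (Algebra.TensorProduct.lmul' A (S := B)), e * x = 0)
    (b : B)
    (m : ℕ) (x : Fin m → B ⊗[A] B) (f : Fin m → (B ⊗[A] B) →ₗ[B] B)
    (hdual : ∀ z : B ⊗[A] B, ∑ i, f i z • x i = z) :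
    ∑ i, f i (e * (b ⊗ₜ[A] (1 : B)) * x i) = b := by
  set μ := Algebra.TensorProduct.lmul' A (S := B) with hμ
  have hsmul : ∀ (c : B) (z : B ⊗[A] B), c • z = (c ⊗ₜ[A] (1 : B)) * z := by
    intro c z
    rw [Algebra.smul_def]
    rfl
  have hμsmul : ∀ (c : B) (z : B ⊗[A] B), μ (c • z) = c * μ z := by
    intro c z
    rw [hsmul, map_mul]
    simp [hμ]
  have key : ∀ z : B ⊗[A] B, e * z = μ z • e := by
    intro z
    have h0 : e * (z - μ z • (1 : B ⊗[A] B)) = 0 := he0 _ (by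
      simp [RingHom.mem_ker, hμsmul])
    rw [mul_sub, sub_eq_zero] at h0
    rw [h0, mul_smul_comm, mul_one]
  have step : ∀ i, f i (e * (b ⊗ₜ[A] (1 : B)) * x i) = b * (μ (x i) * f i e) := by
    intro i
    have : e * (b ⊗ₜ[A] (1 : B)) * x i = b • (μ (x i) • e) := by
      rw [mul_right_comm, key (x i), hsmul b, hsmul (μ (x i))]
      ring
    rw [this, map_smul, map_smul, smul_eq_mul, smul_eq_mul]
  calc ∑ i, f i (e * (b ⊗ₜ[A] (1 : B)) * x i) = b * ∑ i, μ (f i e • x i) := by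
        rw [Finset.mul_sum]
        refine Finset.sum_congr rfl fun i _ => ?_
        rw [step i, hμsmul]
        ring
    _ = b * μ (∑ i, f i e • x i) := by rw [map_sum]
    _ = b := by rw [hdual e, he1, mul_one]
end

section
/- Let A be a commutative ring and let B be a commutative A-algebra which is finitely generated and projective as an A-module. Let μ : B ⊗_A B → B be the multiplication map, and suppose e ∈ B ⊗_A B is an idempotent satisfying μ(e) = 1 and e·x = 0 for every x ∈ ker μ (such an e exists when B is étale over A). Then for every b ∈ B one has tr_{B/A}(b) = tr_{(B ⊗_A B)/A}(e·(b ⊗ 1)). Equivalently, writing ν : B → B ⊗_A B for the multiplicative section ν(b) = e·(b ⊗ 1) of μ, the usual trace satisfies tr_{B/A} = (tr_{B/A} ⊗ tr_{B/A}) ∘ ν. -/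
open scoped TensorProduct

universe u

/-- Let `A` be a commutative ring and `B` a commutative `A`-algebra which is
finitely generated and projective as an `A`-module.  Let `μ : B ⊗[A] B → B` be the
multiplication map and suppose `e ∈ B ⊗[A] B` is an idempotent with `μ e = 1` and `e * x = 0`
for every `x ∈ ker μ`.  Then `tr_{B/A} b = tr_{(B ⊗[A] B)/A} (e * (b ⊗ 1))` for every `b : B`.

The trace over `A` of multiplication by an element on a finitely generated projective
`A`-module is expressed through an arbitrary finite dual system `(x, f)`
(so that `z = ∑ i, f i z • x i` for all `z`) as `∑ i, f i (z * x i)`;  the statement is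
quantified over all such dual systems for `B` and for `B ⊗[A] B` over `A`. -/
theorem statement7 (A B : Type u) [CommRing A] [CommRing B] [Algebra A B]
    [Module.Finite A B] [Module.Projective A B]
    (e : B ⊗[A] B) (he : IsIdempotentElem e)
    (he1 : Algebra.TensorProduct.lmul' A (S := B) e = 1)
    (he0 : ∀ x ∈ RingHom.ker (Algebra.TensorProduct.lmul' A (S := B)), e * x = 0)
    (b : B)
    (m : ℕ) (x : Fin m → B) (f : Fin m → B →ₗ[A] A)
    (hdualB : ∀ z : B, ∑ i, f i z • x i = z)
    (m' : ℕ) (y : Fin m' → B ⊗[A] B) (g : Fin m' → (B ⊗[A] B) →ₗ[A] A)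
    (hdualBB : ∀ z : B ⊗[A] B, ∑ j, g j z • y j = z) :
    ∑ i, f i (b * x i) = ∑ j, g j (e * (b ⊗ₜ[A] (1 : B)) * y j) := by
  classical
  set μ := Algebra.TensorProduct.lmul' A (S := B) with hμ
  set ν : B →ₗ[A] B ⊗[A] B :=
    (LinearMap.mulLeft A e).comp ((TensorProduct.mk A B B).flip 1) with hν
  have hνapp : ∀ c : B, ν c = e * (c ⊗ₜ[A] (1 : B)) := fun c => rfl
  have hμν : ∀ c : B, μ (ν c) = c := by
    intro c
    rw [hνapp, map_mul, he1, Algebra.TensorProduct.lmul'_apply_tmul, mul_one, one_mul]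
  have key : ∀ z : B ⊗[A] B, e * (b ⊗ₜ[A] (1 : B)) * z = ν (b * μ z) := by
    intro z
    have hker : z - (μ z) ⊗ₜ[A] (1 : B) ∈ RingHom.ker μ := by
      simp [RingHom.mem_ker, map_sub, hμ, Algebra.TensorProduct.lmul'_apply_tmul]
    have h0 : e * z - e * ((μ z) ⊗ₜ[A] (1 : B)) = 0 := by
      rw [← mul_sub]; exact he0 _ hker
    have hez : e * z = e * ((μ z) ⊗ₜ[A] (1 : B)) := sub_eq_zero.mp h0
    calc e * (b ⊗ₜ[A] (1 : B)) * z = (b ⊗ₜ[A] (1 : B)) * (e * z) := by ring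
      _ = (b ⊗ₜ[A] (1 : B)) * (e * ((μ z) ⊗ₜ[A] (1 : B))) := by rw [hez]
      _ = e * ((b ⊗ₜ[A] (1 : B)) * ((μ z) ⊗ₜ[A] (1 : B))) := by ring
      _ = ν (b * μ z) := by
          rw [hνapp, Algebra.TensorProduct.tmul_mul_tmul, mul_one]
  have hL : ∀ i, f i (b * x i) = ∑ j, g j (ν (x i)) * (f i (b * μ (y j))) := by
    intro i
    conv_lhs => rw [← hμν (x i), ← hdualBB (ν (x i))]
    rw [map_sum, Finset.mul_sum, map_sum]
    refine Finset.sum_congr rfl fun j _ => ?_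
    rw [map_smul, mul_smul_comm, map_smul, smul_eq_mul]
  have hR : ∀ j, g j (e * (b ⊗ₜ[A] (1 : B)) * y j)
      = ∑ i, f i (b * μ (y j)) * g j (ν (x i)) := by
    intro j
    rw [key (y j)]
    conv_lhs => rw [← hdualB (b * μ (y j))]
    rw [map_sum, map_sum]
    refine Finset.sum_congr rfl fun i _ => ?_
    rw [map_smul, map_smul, smul_eq_mul]
  calc ∑ i, f i (b * x i) = ∑ i, ∑ j, g j (ν (x i)) * (f i (b * μ (y j))) := by
        exact Finset.sum_congr rfl fun i _ => hL i
    _ = ∑ j, ∑ i, f i (b * μ (y j)) * g j (ν (x i)) := by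
        rw [Finset.sum_comm]
        exact Finset.sum_congr rfl fun i _ => Finset.sum_congr rfl fun j _ => mul_comm _ _
    _ = ∑ j, g j (e * (b ⊗ₜ[A] (1 : B)) * y j) := by
        exact Finset.sum_congr rfl fun j _ => (hR j).symm
end

section
/- Let A ⊆ B ⊆ C be fields such that B and C are essentially smooth of relative dimension n as commutative A-algebras, and such that C is a finite field extension of B which is not separable. Then the canonical map Ω^n_{B/A} → Ω^n_{C/A}, induced in n-th exterior powers by the functoriality map Ω¹_{B/A} → Ω¹_{C/A} of Kähler differentials, is the zero map. -/
/-!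
The differentials `d b` of elements of `B` span a proper `C`-subspace of `Ω¹_{C/A}`: otherwise
`Ω¹_{C/B} = 0`, i.e. `C/B` would be unramified, hence separable. A wedge of `n` vectors lying in
a subspace of dimension `< n` vanishes, and the wedges `db₁ ∧ … ∧ dbₙ` span `Ω^n_{B/A}`, so the
semilinear map `ι` is zero.
-/

universe u

open ExteriorAlgebra

/-- The wedge `d v 1 ∧ … ∧ d v n` of differentials of elements of `B`, as an element of the
`n`-th exterior power `Ω^n_{B/A} = ⋀[B]^n Ω[B⁄A]` of the module of Kähler differentials. -/
noncomputable def wedgeOfDifferentials (A B : Type u) [CommRing A] [CommRing B] [Algebra A B]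
    (n : ℕ) (v : Fin n → B) : ↥(⋀[B]^n (Ω[B⁄A])) :=
  ⟨ExteriorAlgebra.ιMulti B n (fun i => KaehlerDifferential.D A B (v i)),
    ExteriorAlgebra.ιMulti_range B n (Set.mem_range_self _)⟩

theorem AlternatingMap.map_eq_zero_of_forall_mem {K M N ι : Type*} [DivisionRing K]
    [AddCommGroup M] [Module K M] [AddCommGroup N] [Module K N] [Fintype ι]
    (f : M [⋀^ι]→ₗ[K] N) (p : Submodule K M) [FiniteDimensional K p]
    (hp : Module.finrank K p < Fintype.card ι) (v : ι → M) (hv : ∀ i, v i ∈ p) : f v = 0 := by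
  refine f.map_linearDependent v fun hli => hp.not_ge ?_
  have hli' : LinearIndependent K (fun i => (⟨v i, hv i⟩ : p)) :=
    .of_comp p.subtype hli
  exact hli'.fintype_card_le_finrank

namespace KaehlerDifferential

variable (R S T : Type*) [CommRing R] [CommRing S] [CommRing T] [Algebra R S] [Algebra R T]
  [Algebra S T] [IsScalarTower R S T]

theorem span_D_algebraMap_le_ker_map :
    Submodule.span T (Set.range fun s : S => D R T (algebraMap S T s)) ≤
      LinearMap.ker (map R S T T) := by
  rw [Submodule.span_le]
  rintro _ ⟨s, rfl⟩
  simp [map_D]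

theorem formallyUnramified_of_span_D_algebraMap_eq_top
    (h : Submodule.span T (Set.range fun s : S => D R T (algebraMap S T s)) = ⊤) :
    Algebra.FormallyUnramified S T := by
  have hker : LinearMap.ker (map R S T T) = ⊤ :=
    top_le_iff.1 (h ▸ span_D_algebraMap_le_ker_map R S T)
  refine ⟨⟨fun x y => ?_⟩⟩
  obtain ⟨x, rfl⟩ := map_surjective R S T x
  obtain ⟨y, rfl⟩ := map_surjective R S T y
  rw [LinearMap.ker_eq_top.1 hker]
  rfl

theorem span_D_algebraMap_ne_top_of_not_isSeparable (A : Type*) (B C : Type u) [CommRing A]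
    [Field B] [Field C] [Algebra A B] [Algebra A C] [Algebra B C] [IsScalarTower A B C]
    [Module.Finite B C]
    (hinsep : ¬ Algebra.IsSeparable B C) :
    Submodule.span C (Set.range fun b : B => D A C (algebraMap B C b)) ≠ ⊤ := fun h =>
  hinsep <| (Algebra.FormallyUnramified.iff_isSeparable B C).1 <|
    formallyUnramified_of_span_D_algebraMap_eq_top A B C h

end KaehlerDifferential

theorem span_range_wedgeOfDifferentials (A B : Type u) [CommRing A] [CommRing B] [Algebra A B]
    (n : ℕ) : Submodule.span B (Set.range (wedgeOfDifferentials A B n)) = ⊤ := by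
  rw [eq_top_iff, ← exteriorPower.ιMulti_span_of_span B n (Ω[B⁄A])
    (KaehlerDifferential.span_range_derivation A B), Submodule.span_le]
  rintro _ ⟨a, ha, rfl⟩
  choose v hv using fun i => ha ⟨i, rfl⟩
  obtain rfl : a = fun i => KaehlerDifferential.D A B (v i) := funext fun i => (hv i).symm
  exact Submodule.subset_span ⟨v, rfl⟩

theorem wedgeOfDifferentials_algebraMap_eq_zero (A B C : Type u) [CommRing A] [Field B] [Field C]
    [Algebra A B] [Algebra A C] [Algebra B C] [IsScalarTower A B C] (n : ℕ)
    [Module.Finite C (Ω[C⁄A])] (hrkC : Module.finrank C (Ω[C⁄A]) = n) [Module.Finite B C]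
    (hinsep : ¬ Algebra.IsSeparable B C) (v : Fin n → B) :
    wedgeOfDifferentials A C n (fun i => algebraMap B C (v i)) = 0 := by
  set N := Submodule.span C (Set.range fun b : B => KaehlerDifferential.D A C (algebraMap B C b))
  have hN : Module.finrank C N < Fintype.card (Fin n) := by
    rw [Fintype.card_fin, ← hrkC]
    exact Submodule.finrank_lt
      (KaehlerDifferential.span_D_algebraMap_ne_top_of_not_isSeparable A B C hinsep)
  exact Subtype.ext <| (ιMulti C n).map_eq_zero_of_forall_mem N hN _
    fun i => Submodule.subset_span ⟨v i, rfl⟩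

theorem statement10_general (A B C : Type u) [Field A] [Field B] [Field C]
    [Algebra A B] [Algebra A C] [Algebra B C] [IsScalarTower A B C]
    (n : ℕ)
    -- `C` is essentially smooth of relative dimension `n` over `A`
    [Module.Finite C (Ω[C⁄A])] (hrkC : Module.finrank C (Ω[C⁄A]) = n)
    -- `C` is a finite non-separable field extension of `B`
    [Module.Finite B C] (hinsep : ¬ Algebra.IsSeparable B C)
    -- `ι` is the canonical map `Ω^n_{B/A} → Ω^n_{C/A}`:
    (ι : ↥(⋀[B]^n (Ω[B⁄A])) →+ ↥(⋀[C]^n (Ω[C⁄A])))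
    (hsemilin : ∀ (b : B) (ω : ↥(⋀[B]^n (Ω[B⁄A]))),
      ι (b • ω) = (algebraMap B C b) • ι ω)
    (hwedge : ∀ v : Fin n → B,
      ι (wedgeOfDifferentials A B n v) =
        wedgeOfDifferentials A C n (fun i => algebraMap B C (v i))) :
    ∀ ω : ↥(⋀[B]^n (Ω[B⁄A])), ι ω = 0 := by
  let ιₛₗ : ↥(⋀[B]^n (Ω[B⁄A])) →ₛₗ[algebraMap B C] ↥(⋀[C]^n (Ω[C⁄A])) :=
    { ι with map_smul' := hsemilin }
  have hzero : ιₛₗ = 0 := LinearMap.ext_on_range (span_range_wedgeOfDifferentials A B n)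
    fun v => (hwedge v).trans
      (wedgeOfDifferentials_algebraMap_eq_zero A B C n hrkC hinsep v)
  exact fun ω => LinearMap.congr_fun hzero ω

/-- Let `A ⊆ B ⊆ C` be fields such that `B` and `C` are essentially smooth
of relative dimension `n` as commutative `A`-algebras, and such that `C` is a finite,
non-separable field extension of `B`.  Then the canonical map `Ω^n_{B/A} → Ω^n_{C/A}`
(the additive map which is semilinear over `B → C` and sends `db₁ ∧ … ∧ dbₙ` to
`db₁ ∧ … ∧ dbₙ` computed in `Ω^n_{C/A}`) is the zero map. -/
theorem statement10 (A B C : Type u) [Field A] [Field B] [Field C]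
    [Algebra A B] [Algebra A C] [Algebra B C] [IsScalarTower A B C]
    (n : ℕ)
    -- `B` is essentially smooth of relative dimension `n` over `A`
    [Algebra.EssFiniteType A B] [Algebra.FormallySmooth A B]
    [Module.Finite B (Ω[B⁄A])] (hrkB : Module.finrank B (Ω[B⁄A]) = n)
    -- `C` is essentially smooth of relative dimension `n` over `A`
    [Algebra.EssFiniteType A C] [Algebra.FormallySmooth A C]
    [Module.Finite C (Ω[C⁄A])] (hrkC : Module.finrank C (Ω[C⁄A]) = n)
    -- `C` is a finite non-separable field extension of `B`
    [Module.Finite B C] (hinsep : ¬ Algebra.IsSeparable B C)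
    -- `ι` is the canonical map `Ω^n_{B/A} → Ω^n_{C/A}`:
    (ι : ↥(⋀[B]^n (Ω[B⁄A])) →+ ↥(⋀[C]^n (Ω[C⁄A])))
    (hsemilin : ∀ (b : B) (ω : ↥(⋀[B]^n (Ω[B⁄A]))),
      ι (b • ω) = (algebraMap B C b) • ι ω)
    (hwedge : ∀ v : Fin n → B,
      ι (wedgeOfDifferentials A B n v) =
        wedgeOfDifferentials A C n (fun i => algebraMap B C (v i))) :
    ∀ ω : ↥(⋀[B]^n (Ω[B⁄A])), ι ω = 0 :=
  statement10_general A B C n hrkC hinsep ι hsemilin hwedge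
end
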